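/- Fix integers x ≥ y ≥ 4. Define a simple graph on the x+y−2 vertices v_1, …, v_x, w_1, …, w_{y−2} with the following edges: the cycle v_1 v_2 … v_x v_1; the path w_1 w_2 … w_{y−2}; the edges w_{y−2} v_x and v_{x−1} w_1; the edges v_1 w_j for all 1 ≤ j ≤ y−2; and the edges w_1 v_i for all 2 ≤ i ≤ x−2. Then in this graph, the vertex v_1 has degree y, the vertex w_1 has degree x, and every other vertex has degree 3; that is, its degree sequence is x, y, 3^{x+y−4}. -/

import Mathlib

open scoped Classical

noncomputable section

/-- Euclidean 3-space. -/
abbrev E3 : Type := EuclideanSpace ℝ (Fin 3)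

/-- A 3-dimensional convex polytope in ℝ³: the convex hull of a finite set of points,
having nonempty interior (so that it is genuinely 3-dimensional). -/
def IsPolytope3 (P : Set E3) : Prop :=
  (∃ S : Finset E3, P = convexHull ℝ (S : Set E3)) ∧ (interior P).Nonempty

/-- The affine dimension of a subset of ℝ³. -/
def affDim (F : Set E3) : ℕ :=
  Module.finrank ℝ (affineSpan ℝ F).direction

/-- A face of a polytope `P`: a nonempty convex extreme subset of `P`. -/
def IsFaceOf (P F : Set E3) : Prop :=
  IsExtreme ℝ P F ∧ Convex ℝ F ∧ F.Nonempty

/-- The vertices of a polytope are its extreme points. -/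
def IsVertexOf (P : Set E3) (v : E3) : Prop :=
  v ∈ Set.extremePoints ℝ P

/-- The edges of a polytope are its 1-dimensional faces. -/
def IsEdgeOf (P e : Set E3) : Prop :=
  IsFaceOf P e ∧ affDim e = 1

/-- The 2-faces of a (3-dimensional) polytope are its 2-dimensional faces. -/
def Is2FaceOf (P F : Set E3) : Prop :=
  IsFaceOf P F ∧ affDim F = 2

/-- The 1-skeleton of a polytope: the graph on its vertices in which two vertices are
adjacent exactly when the segment between them is an edge of the polytope. -/
def skeleton (P : Set E3) : SimpleGraph {v : E3 // IsVertexOf P v} where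
  Adj v w := v ≠ w ∧ IsEdgeOf P (segment ℝ (v : E3) (w : E3))
  symm := by
    constructor
    rintro v w ⟨hne, he⟩
    exact ⟨hne.symm, by rwa [segment_symm]⟩
  loopless := by
    constructor
    rintro v ⟨hne, -⟩
    exact hne rfl

/-- The face-adjacency graph of a polytope (the graph of the dual polytope): its vertices
are the 2-faces of the polytope, two of them being adjacent exactly when they share an
edge of the polytope. -/
def faceGraph (P : Set E3) : SimpleGraph {F : Set E3 // Is2FaceOf P F} where
  Adj F F' := F ≠ F' ∧ ∃ e : Set E3, IsEdgeOf P e ∧ e ⊆ (F : Set E3) ∧ e ⊆ (F' : Set E3)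
  symm := by
    constructor
    rintro F F' ⟨hne, e, he, h1, h2⟩
    exact ⟨hne.symm, e, he, h2, h1⟩
  loopless := by
    constructor
    rintro F ⟨hne, -⟩
    exact hne rfl

/-- A graph is polyhedral (`3`-polytopal) if it is isomorphic to the 1-skeleton of a
3-dimensional convex polytope; by the Rademacher–Steinitz theorem this is equivalent to
being a planar, 3-connected simple graph. -/
def Polyhedral {V : Type*} (G : SimpleGraph V) : Prop :=
  ∃ P : Set E3, IsPolytope3 P ∧ Nonempty (G ≃g skeleton P)

/-- A polyhedral graph is self-dual if it is isomorphic to its dual graph, i.e. it has a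
polytopal realisation whose face-adjacency graph is again isomorphic to the graph itself. -/
def SelfDual {V : Type*} (G : SimpleGraph V) : Prop :=
  ∃ P : Set E3, IsPolytope3 P ∧ Nonempty (G ≃g skeleton P) ∧ Nonempty (G ≃g faceGraph P)

/-- The degree sequence (multiset of vertex degrees) of a finite simple graph. -/
def degSeq {V : Type*} [Fintype V] (G : SimpleGraph V) : Multiset ℕ :=
  (Finset.univ : Finset V).val.map fun v => Nat.card (G.neighborSet v)

/-- The radial (vertex–face) graph of a polytope: the bipartite graph on vertices and
2-faces, a vertex `v` being adjacent to a face `F` exactly when `v` lies on `F`. -/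
def radial (P : Set E3) :
    SimpleGraph ({v : E3 // IsVertexOf P v} ⊕ {F : Set E3 // Is2FaceOf P F}) :=
  SimpleGraph.fromRel fun a b =>
    ∃ (v : {v : E3 // IsVertexOf P v}) (F : {F : Set E3 // Is2FaceOf P F}),
      a = Sum.inl v ∧ b = Sum.inr F ∧ (v : E3) ∈ (F : Set E3)

/-- The number of sides of a 2-face of a polytope: the number of polytope vertices
lying on it. -/
def faceSides (P F : Set E3) : ℕ :=
  Nat.card {v : E3 // IsVertexOf P v ∧ v ∈ F}

/-- The explicit graph `S(x,y)` on the `x+y−2` vertices `v_1, …, v_x` (encoded as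
`Sum.inl 0, …, Sum.inl (x-1)`) and `w_1, …, w_(y−2)` (encoded as
`Sum.inr 0, …, Sum.inr (y-3)`), with edges: the cycle `v_1 v_2 … v_x v_1`; the path
`w_1 w_2 … w_(y−2)`; the edges `w_(y−2) v_x` and `v_(x−1) w_1`; the edges `v_1 w_j`
for all `1 ≤ j ≤ y−2`; and the edges `w_1 v_i` for all `2 ≤ i ≤ x−2`. -/
def SxyGraph (x y : ℕ) : SimpleGraph (Fin x ⊕ Fin (y - 2)) :=
  SimpleGraph.fromRel fun a b =>
    match a, b with
    | Sum.inl i, Sum.inl i' => (i' : ℕ) = ((i : ℕ) + 1) % x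
    | Sum.inr j, Sum.inr j' => (j' : ℕ) = (j : ℕ) + 1
    | Sum.inl i, Sum.inr j =>
        ((i : ℕ) = x - 1 ∧ (j : ℕ) = y - 3) ∨
        ((i : ℕ) = x - 2 ∧ (j : ℕ) = 0) ∨
        (i : ℕ) = 0 ∨
        ((j : ℕ) = 0 ∧ 1 ≤ (i : ℕ) ∧ (i : ℕ) ≤ x - 3)
    | Sum.inr _, Sum.inl _ => False


/-! The neighbourhoods are read off directly: `v_1` sees `v_2`, `v_x` and the whole path
`w_1 … w_(y−2)`; `w_1` sees `w_2` and `v_1, …, v_(x−1)`; `v_2, …, v_(x−1)` see their two cycle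
neighbours and `w_1`; `v_x` sees `v_(x−1)`, `v_1` and `w_(y−2)`; `w_2, …, w_(y−3)` see their two
path neighbours and `v_1`; and `w_(y−2)` sees `w_(y−3)`, `v_1` and `v_x`. -/

theorem Nat.eq_add_one_mod_iff {a b n : ℕ} (ha : a < n) (hb : b < n) :
    b = (a + 1) % n ↔ b = a + 1 ∨ (a + 1 = n ∧ b = 0) := by
  rcases (Nat.succ_le_of_lt ha).lt_or_eq with h | h
  · rw [Nat.mod_eq_of_lt h]; omega
  · rw [← h, Nat.mod_self]; omega

namespace SxyGraph

variable {x y : ℕ}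

theorem adj_inl_inl {i i' : Fin x} :
    (SxyGraph x y).Adj (.inl i) (.inl i') ↔ (i : ℕ) ≠ i' ∧
      ((i' : ℕ) = i + 1 ∨ (i : ℕ) = i' + 1 ∨ ((i : ℕ) = 0 ∧ (i' : ℕ) + 1 = x) ∨
        ((i' : ℕ) = 0 ∧ (i : ℕ) + 1 = x)) := by
  simp only [SxyGraph, SimpleGraph.fromRel_adj, ne_eq, Sum.inl.injEq, Fin.ext_iff,
    Nat.eq_add_one_mod_iff i.isLt i'.isLt, Nat.eq_add_one_mod_iff i'.isLt i.isLt]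
  omega

theorem adj_inr_inr {j j' : Fin (y - 2)} :
    (SxyGraph x y).Adj (.inr j) (.inr j') ↔ (j' : ℕ) = j + 1 ∨ (j : ℕ) = j' + 1 := by
  simp only [SxyGraph, SimpleGraph.fromRel_adj, ne_eq, Sum.inr.injEq, Fin.ext_iff]
  omega

theorem adj_inl_inr {i : Fin x} {j : Fin (y - 2)} :
    (SxyGraph x y).Adj (.inl i) (.inr j) ↔
      ((i : ℕ) = x - 1 ∧ (j : ℕ) = y - 3) ∨ ((i : ℕ) = x - 2 ∧ (j : ℕ) = 0) ∨ (i : ℕ) = 0 ∨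
        ((j : ℕ) = 0 ∧ 1 ≤ (i : ℕ) ∧ (i : ℕ) ≤ x - 3) := by
  simp [SxyGraph]

theorem adj_inr_inl {i : Fin x} {j : Fin (y - 2)} :
    (SxyGraph x y).Adj (.inr j) (.inl i) ↔
      ((i : ℕ) = x - 1 ∧ (j : ℕ) = y - 3) ∨ ((i : ℕ) = x - 2 ∧ (j : ℕ) = 0) ∨ (i : ℕ) = 0 ∨
        ((j : ℕ) = 0 ∧ 1 ≤ (i : ℕ) ∧ (i : ℕ) ≤ x - 3) := by
  rw [SimpleGraph.adj_comm, adj_inl_inr]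

theorem card_neighborSet_inl_zero {i : Fin x} (hi : (i : ℕ) = 0) (hx : 3 ≤ x) (hy : 2 ≤ y) :
    Nat.card ((SxyGraph x y).neighborSet (.inl i)) = y := by
  have hN : (SxyGraph x y).neighborSet (.inl i) =
      insert (.inl ⟨1, by omega⟩) (insert (.inl ⟨x - 1, by omega⟩) (Set.range .inr)) := by
    ext (i' | j) <;> simp [adj_inl_inl, adj_inl_inr, hi, Fin.ext_iff]; omega
  rw [Nat.card_coe_set_eq, hN, Set.ncard_insert_of_notMem (by simp [Fin.ext_iff]; omega),
    Set.ncard_insert_of_notMem (by simp), Set.ncard_range_of_injective Sum.inr_injective,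
    Nat.card_eq_fintype_card, Fintype.card_fin]
  omega

theorem card_neighborSet_inr_zero {j : Fin (y - 2)} (hj : (j : ℕ) = 0) (hx : 2 ≤ x)
    (hy : 4 ≤ y) : Nat.card ((SxyGraph x y).neighborSet (.inr j)) = x := by
  have hN : (SxyGraph x y).neighborSet (.inr j) =
      insert (.inr ⟨1, by omega⟩) (.inl '' Set.range (Fin.castLE (Nat.sub_le x 1))) := by
    ext (i | j') <;>
      simp [adj_inr_inr, adj_inr_inl, hj, Sum.inl_injective.mem_set_image, Fin.range_castLE,
        Fin.ext_iff]; omega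
  rw [Nat.card_coe_set_eq, hN, Set.ncard_insert_of_notMem (by simp),
    Set.ncard_image_of_injective _ Sum.inl_injective,
    Set.ncard_range_of_injective (Fin.castLE_injective _), Nat.card_eq_fintype_card,
    Fintype.card_fin]
  omega

theorem card_neighborSet_inl_of_ne_zero_of_lt {i : Fin x} (hi₀ : (i : ℕ) ≠ 0)
    (hi : (i : ℕ) + 1 < x) (hy : 3 ≤ y) : Nat.card ((SxyGraph x y).neighborSet (.inl i)) = 3 := by
  rw [Nat.card_coe_set_eq, Set.ncard_eq_three]
  refine ⟨.inl ⟨i - 1, by omega⟩, .inl ⟨i + 1, hi⟩, .inr ⟨0, by omega⟩,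
    by simp [Fin.ext_iff], by simp, by simp, ?_⟩
  ext (i' | j) <;> simp [adj_inl_inl, adj_inl_inr, Fin.ext_iff] <;> omega

theorem card_neighborSet_inl_last {i : Fin x} (hi : (i : ℕ) + 1 = x) (hx : 3 ≤ x) (hy : 3 ≤ y) :
    Nat.card ((SxyGraph x y).neighborSet (.inl i)) = 3 := by
  rw [Nat.card_coe_set_eq, Set.ncard_eq_three]
  refine ⟨.inl ⟨x - 2, by omega⟩, .inl ⟨0, by omega⟩, .inr ⟨y - 3, by omega⟩,
    by simp [Fin.ext_iff]; omega, by simp, by simp, ?_⟩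
  ext (i' | j) <;> simp [adj_inl_inl, adj_inl_inr, Fin.ext_iff] <;> omega

theorem card_neighborSet_inr_of_ne_zero_of_lt {j : Fin (y - 2)} (hj₀ : (j : ℕ) ≠ 0)
    (hj : (j : ℕ) + 3 < y) (hx : 1 ≤ x) : Nat.card ((SxyGraph x y).neighborSet (.inr j)) = 3 := by
  rw [Nat.card_coe_set_eq, Set.ncard_eq_three]
  refine ⟨.inr ⟨j - 1, by omega⟩, .inr ⟨j + 1, by omega⟩, .inl ⟨0, by omega⟩,
    by simp [Fin.ext_iff], by simp, by simp, ?_⟩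
  ext (i | j') <;> simp [adj_inr_inr, adj_inr_inl, Fin.ext_iff] <;> omega

theorem card_neighborSet_inr_last {j : Fin (y - 2)} (hj₀ : (j : ℕ) ≠ 0) (hj : (j : ℕ) + 3 = y)
    (hx : 2 ≤ x) : Nat.card ((SxyGraph x y).neighborSet (.inr j)) = 3 := by
  rw [Nat.card_coe_set_eq, Set.ncard_eq_three]
  refine ⟨.inr ⟨y - 4, by omega⟩, .inl ⟨0, by omega⟩, .inl ⟨x - 1, by omega⟩,
    by simp, by simp, by simp [Fin.ext_iff]; omega, ?_⟩
  ext (i | j') <;> simp [adj_inr_inr, adj_inr_inl, Fin.ext_iff] <;> omega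

theorem card_neighborSet_of_ne (hx : 3 ≤ x) (hy : 3 ≤ y) (z : Fin x ⊕ Fin (y - 2))
    (h₁ : z ≠ .inl ⟨0, by omega⟩) (h₂ : z ≠ .inr ⟨0, by omega⟩) :
    Nat.card ((SxyGraph x y).neighborSet z) = 3 := by
  rcases z with i | j
  · have hi₀ : (i : ℕ) ≠ 0 := fun h => h₁ (congrArg Sum.inl (Fin.ext h))
    obtain hi | hi : (i : ℕ) + 1 < x ∨ (i : ℕ) + 1 = x := by omega
    · exact card_neighborSet_inl_of_ne_zero_of_lt hi₀ hi (by omega)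
    · exact card_neighborSet_inl_last hi hx (by omega)
  · have hj₀ : (j : ℕ) ≠ 0 := fun h => h₂ (congrArg Sum.inr (Fin.ext h))
    obtain hj | hj : (j : ℕ) + 3 < y ∨ (j : ℕ) + 3 = y := by omega
    · exact card_neighborSet_inr_of_ne_zero_of_lt hj₀ hj (by omega)
    · exact card_neighborSet_inr_last hj₀ hj (by omega)

end SxyGraph

theorem degSeq_eq_cons_cons_replicate {V : Type*} [Fintype V] (G : SimpleGraph V) {a b : V}
    (hab : a ≠ b) {d : ℕ} (hd : ∀ z, z ≠ a → z ≠ b → Nat.card (G.neighborSet z) = d) :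
    degSeq G = Nat.card (G.neighborSet a) ::ₘ Nat.card (G.neighborSet b) ::ₘ
      Multiset.replicate (Fintype.card V - 2) d := by
  set s := (Finset.univ.erase a).erase b
  have hb : b ∈ Finset.univ.erase a := Finset.mem_erase.2 ⟨hab.symm, Finset.mem_univ b⟩
  have huniv : (Finset.univ : Finset V) = insert a (insert b s) := by
    rw [Finset.insert_erase hb, Finset.insert_erase (Finset.mem_univ a)]
  have hs : s.val.map (fun z => Nat.card (G.neighborSet z)) =
      Multiset.replicate (Fintype.card V - 2) d := by
    refine Multiset.eq_replicate.2 ⟨?_, ?_⟩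
    · rw [Multiset.card_map, Finset.card_val, Finset.card_erase_of_mem hb,
        Finset.card_erase_of_mem (Finset.mem_univ a), Finset.card_univ]
      omega
    · intro n hn
      obtain ⟨z, hz, rfl⟩ := Multiset.mem_map.1 hn
      exact hd z (Finset.ne_of_mem_erase (Finset.mem_of_mem_erase hz)) (Finset.ne_of_mem_erase hz)
  rw [degSeq, huniv, Finset.insert_val_of_notMem (by simp [s, hab]),
    Finset.insert_val_of_notMem (by simp [s]), Multiset.map_cons, Multiset.map_cons, hs]

/-- Fix integers `x ≥ y ≥ 4`. In the graph `SxyGraph x y` described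
above, the vertex `v_1` has degree `y`, the vertex `w_1` has degree `x`, and every other
vertex has degree `3`; that is, its degree sequence is `x, y, 3^(x+y−4)`. -/
theorem SxyGraph_degrees (x y : ℕ) (hy : 4 ≤ y) (hxy : y ≤ x) :
    Nat.card ((SxyGraph x y).neighborSet (Sum.inl ⟨0, by omega⟩)) = y ∧
    Nat.card ((SxyGraph x y).neighborSet (Sum.inr ⟨0, by omega⟩)) = x ∧
    (∀ z : Fin x ⊕ Fin (y - 2),
      z ≠ Sum.inl ⟨0, by omega⟩ → z ≠ Sum.inr ⟨0, by omega⟩ →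
      Nat.card ((SxyGraph x y).neighborSet z) = 3) ∧
    degSeq (SxyGraph x y) = x ::ₘ y ::ₘ Multiset.replicate (x + y - 4) 3 := by
  have hx : 3 ≤ x := by omega
  have hv := SxyGraph.card_neighborSet_inl_zero (y := y) (i := ⟨0, by omega⟩) rfl hx (by omega)
  have hw := SxyGraph.card_neighborSet_inr_zero (x := x) (j := ⟨0, by omega⟩) rfl (by omega) hy
  have hrest := SxyGraph.card_neighborSet_of_ne (y := y) hx (by omega)
  refine ⟨hv, hw, hrest, ?_⟩
  rw [degSeq_eq_cons_cons_replicate _ Sum.inl_ne_inr hrest, hv, hw, Multiset.cons_swap,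
    Fintype.card_sum, Fintype.card_fin, Fintype.card_fin]
  congr 3
  omega
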